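/- Weyl's law for the cube: the counting function 𝓝(𝓔) = #{n ∈ (ℤ_{>0})^d : ∑_i (n_i π/L)^{2s} ≤ 𝓔} satisfies 𝓝(𝓔) = (L^d/(2π)^d)·|B_{d,2s}|·𝓔^{d/(2s)} + o(𝓔^{d/(2s)}) as 𝓔 → ∞, where |B_{d,2s}| = (2Γ(1+1/(2s)))^d/Γ(1+d/(2s)). -/

import Mathlib

/-!
Rescaling by `L / π` turns the count into the number of points of `(ℤ_{>0})^d` in the region
`∑ xᵢ ^ p ≤ T` with `p = 2s ≥ 1`. The part of the `ℓ^p` unit ball in the open positive orthant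
is convex, so its boundary is Lebesgue-null and the lattice points of its dilates are counted
asymptotically by its volume (`ZLattice.covolume.tendsto_card_le_div`). Since the ball is
invariant under sign changes of the coordinates, that volume is `2⁻ᵈ` times the volume
`(2 Γ(1 + 1/p))ᵈ / Γ(1 + d/p)` of the whole ball.
-/

open MeasureTheory Real Filter Set Module Topology
open scoped NNReal ENNReal

theorem MeasureTheory.Measure.pi_smul {ι : Type*} [Fintype ι] {α : ι → Type*}
    [∀ i, MeasurableSpace (α i)] (μ : ∀ i, Measure (α i)) [∀ i, SigmaFinite (μ i)] (c : ℝ≥0) :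
    Measure.pi (fun i => c • μ i) = (c : ℝ≥0∞) ^ Fintype.card ι • Measure.pi μ :=
  Measure.pi_eq fun s _ => by
    rw [Measure.smul_apply, Measure.pi_pi, smul_eq_mul, ← Finset.card_univ, ← Finset.prod_const,
      ← Finset.prod_mul_distrib]
    rfl

theorem Real.map_abs_volume :
    (volume : Measure ℝ).map abs = (2 : ℝ≥0) • volume.restrict (Ioi 0) := by
  have hpos : (volume.restrict (Ioi 0)).map abs = volume.restrict (Ioi (0 : ℝ)) := by
    rw [Measure.map_congr (g := id), Measure.map_id]
    filter_upwards [ae_restrict_mem measurableSet_Ioi] with x hx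
    exact abs_of_pos hx
  have hneg : (volume.restrict (Iio 0)).map abs = volume.restrict (Ioi (0 : ℝ)) := by
    have hrefl := (Measure.measurePreserving_neg (volume : Measure ℝ)).restrict_preimage
      (measurableSet_Ioi (a := (0 : ℝ)))
    rw [Measure.map_congr (g := Neg.neg)]
    · simpa using hrefl.map_eq
    filter_upwards [ae_restrict_mem measurableSet_Iio] with x hx
    exact abs_of_neg hx
  have hsplit : (volume : Measure ℝ) = volume.restrict (Ioi 0) + volume.restrict (Iio 0) := by
    rw [← Measure.restrict_union Ioi_disjoint_Iio_same measurableSet_Iio, union_comm,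
      Iio_union_Ioi, Measure.restrict_congr_set (ae_eq_univ.mpr (by simp)), Measure.restrict_univ]
  conv_lhs => rw [hsplit, Measure.map_add _ _ measurable_abs, hpos, hneg]
  exact (two_smul _ _).symm

section

variable {ι : Type*} [Fintype ι]

theorem MeasureTheory.volume_preimage_pi_abs {S : Set (ι → ℝ)} (hS : MeasurableSet S) :
    volume ((fun (x : ι → ℝ) i => |x i|) ⁻¹' S) =
      2 ^ Fintype.card ι * volume (S ∩ univ.pi fun _ => Ioi 0) := by
  have : SigmaFinite ((volume : Measure ℝ).map abs) := by rw [map_abs_volume]; infer_instance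
  rw [← Measure.map_apply (by fun_prop) hS, volume_pi,
    Measure.pi_map_pi fun _ => measurable_abs.aemeasurable, map_abs_volume, Measure.pi_smul,
    ← Measure.restrict_pi_pi, Measure.smul_apply, Measure.restrict_apply hS]
  simp

theorem ZLattice.covolume_span_basisFun :
    ZLattice.covolume (Submodule.span ℤ (range (Pi.basisFun ℝ ι))) = 1 := by
  classical
  rw [ZLattice.covolume_eq_measure_fundamentalDomain _ _ (ZSpan.isAddFundamentalDomain _ volume),
    ZSpan.volume_real_fundamentalDomain, ← Pi.basisFun_det_apply, Basis.det_self, abs_one]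

theorem card_inter_span_basisFun {S : Set (ι → ℝ)} (hS : S ⊆ univ.pi fun _ => Ioi 0) :
    Nat.card ↥(S ∩ Submodule.span ℤ (range (Pi.basisFun ℝ ι))) =
      Nat.card {n : ι → ℕ | (fun i => (n i : ℝ)) ∈ S} := by
  rw [← Nat.card_image_of_injective (f := fun (n : ι → ℕ) i => (n i : ℝ))
    fun n m h => funext fun i => Nat.cast_injective (congrFun h i)]
  congr
  ext x
  simp only [mem_inter_iff, SetLike.mem_coe, (Pi.basisFun ℝ ι).mem_span_iff_repr_mem ℤ,
    Pi.basisFun_repr, mem_range, algebraMap_int_eq, eq_intCast, mem_image, mem_ofPred_eq]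
  constructor
  · rintro ⟨hx, hint⟩
    choose z hz using hint
    have hcast : (fun i => ((z i).toNat : ℝ)) = x := funext fun i => by
      have hpos : (0 : ℝ) < z i := (hz i).symm ▸ hS hx i (mem_univ i)
      rw [← hz i, ← Int.cast_natCast, Int.toNat_of_nonneg (by exact_mod_cast hpos.le)]
    exact ⟨_, hcast ▸ hx, hcast⟩
  · rintro ⟨n, hn, rfl⟩
    exact ⟨hn, fun i => ⟨n i, by simp⟩⟩

variable {p : ℝ}

theorem sum_abs_rpow_smul_rpow (hp : 0 < p) {r : ℝ} (hr : 0 ≤ r) (x : ι → ℝ) (q : ℝ) :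
    (∑ i, |(r • x) i| ^ p) ^ (q / p) = r ^ q * (∑ i, |x i| ^ p) ^ (q / p) := by
  simp only [Pi.smul_apply, smul_eq_mul, abs_mul, abs_of_nonneg hr, mul_rpow hr (abs_nonneg _),
    ← Finset.mul_sum]
  rw [mul_rpow (by positivity) (by positivity), ← rpow_mul hr, mul_div_cancel₀ _ hp.ne']

theorem isBounded_sum_rpow_le_one (hp : 0 < p) :
    Bornology.IsBounded {x : ι → ℝ | ∑ i, |x i| ^ p ≤ 1} := by
  refine (Metric.isBounded_iff_subset_closedBall 0).2 ⟨1, fun x hx => ?_⟩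
  rw [mem_closedBall_zero_iff, pi_norm_le_iff_of_nonneg zero_le_one]
  intro i
  rw [Real.norm_eq_abs]
  by_contra! h
  have hsingle := Finset.single_le_sum (f := fun j => |x j| ^ p) (fun j _ => by positivity)
    (Finset.mem_univ i)
  exact lt_irrefl _ ((one_lt_rpow h hp).trans_le (hsingle.trans hx))

theorem convex_orthant_sum_rpow_le (hp : 1 ≤ p) (c : ℝ) :
    Convex ℝ {x : ι → ℝ | x ∈ univ.pi (fun _ => Ioi 0) ∧ ∑ i, |x i| ^ p ≤ c} := by
  have hX : Convex ℝ (univ.pi fun _ : ι => Ioi (0 : ℝ)) := convex_pi fun _ _ => convex_Ioi 0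
  refine ConvexOn.convex_le ⟨hX, fun x hx y hy a b ha hb hab => ?_⟩ c
  simp only [smul_eq_mul, Finset.mul_sum, ← Finset.sum_add_distrib]
  gcongr with i
  have hxi : 0 < x i := hx i (mem_univ i)
  have hyi : 0 < y i := hy i (mem_univ i)
  have hconv := (convexOn_rpow hp).2 (mem_Ici.2 hxi.le) (mem_Ici.2 hyi.le) ha hb hab
  simp only [Pi.add_apply, Pi.smul_apply, smul_eq_mul] at hconv ⊢
  rwa [abs_of_pos hxi, abs_of_pos hyi, abs_of_nonneg (by positivity)]

theorem volume_real_orthant_sum_rpow_le_one [Nonempty ι] (hp : 1 ≤ p) :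
    volume.real {x : ι → ℝ | x ∈ univ.pi (fun _ => Ioi 0) ∧ ∑ i, |x i| ^ p ≤ 1} =
      Gamma (1 / p + 1) ^ Fintype.card ι / Gamma (Fintype.card ι / p + 1) := by
  have hp0 : 0 < p := by linarith
  set S := {x : ι → ℝ | ∑ i, |x i| ^ p ≤ 1}
  have hball : S = {x | (∑ i, |x i| ^ p) ^ (1 / p) ≤ 1} := by
    ext x
    simp only [S, mem_ofPred_eq]
    rw [← rpow_le_rpow_iff (z := 1 / p) (by positivity) zero_le_one (by positivity), one_rpow]
  have hvolS : volume.real S =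
      (2 * Gamma (1 / p + 1)) ^ Fintype.card ι / Gamma (Fintype.card ι / p + 1) := by
    rw [measureReal_def, hball, volume_sum_rpow_le ι hp 1, ENNReal.ofReal_one, one_pow, one_mul,
      ENNReal.toReal_ofReal (by positivity)]
  have hsymm : volume.real S = 2 ^ Fintype.card ι * volume.real (S ∩ univ.pi fun _ => Ioi 0) := by
    have hS : MeasurableSet S := measurableSet_le (by fun_prop) measurable_const
    have h := volume_preimage_pi_abs hS
    rw [show (fun (x : ι → ℝ) i => |x i|) ⁻¹' S = S by ext x; simp [S]] at h
    rw [measureReal_def, measureReal_def, h, ENNReal.toReal_mul, ENNReal.toReal_pow]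
    norm_num
  rw [hvolS, mul_pow, mul_div_assoc] at hsymm
  rw [show {x : ι → ℝ | x ∈ univ.pi (fun _ => Ioi 0) ∧ ∑ i, |x i| ^ p ≤ 1} =
    S ∩ univ.pi fun _ => Ioi 0 by ext; simp [S, and_comm]]
  exact (mul_left_cancel₀ (by positivity) hsymm).symm

theorem tendsto_card_posNat_sum_rpow_le_div [Nonempty ι] (hp : 1 ≤ p) :
    Tendsto (fun T : ℝ => (Nat.card {n : ι → ℕ | (∀ i, 0 < n i) ∧ ∑ i, (n i : ℝ) ^ p ≤ T} : ℝ) /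
        T ^ (Fintype.card ι / p))
      atTop (𝓝 (Gamma (1 / p + 1) ^ Fintype.card ι / Gamma (Fintype.card ι / p + 1))) := by
  have hp0 : 0 < p := by linarith
  have hd : 0 < (Fintype.card ι : ℝ) / p := div_pos (Nat.cast_pos.2 Fintype.card_pos) hp0
  set X : Set (ι → ℝ) := univ.pi fun _ => Ioi 0
  -- the `card ι`-th power of the `ℓ^p` norm: `tendsto_card_le_div` needs this homogeneity
  set F : (ι → ℝ) → ℝ := fun x => (∑ i, |x i| ^ p) ^ ((Fintype.card ι : ℝ) / p)
  have hF_le : ∀ x {T : ℝ}, 0 ≤ T →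
      (F x ≤ T ^ ((Fintype.card ι : ℝ) / p) ↔ ∑ i, |x i| ^ p ≤ T) :=
    fun x T hT => rpow_le_rpow_iff (by positivity) hT hd
  have hF_one : {x | x ∈ X ∧ F x ≤ 1} = {x | x ∈ X ∧ ∑ i, |x i| ^ p ≤ 1} := by
    ext x
    simp only [mem_ofPred_eq, ← hF_le x zero_le_one, one_rpow]
  have hX : ∀ ⦃x⦄ ⦃r : ℝ⦄, x ∈ X → 0 < r → r • x ∈ X := fun x r hx hr i _ =>
    mul_pos hr (hx i (mem_univ i))
  have hF : ∀ x ⦃r : ℝ⦄, 0 ≤ r → F (r • x) = r ^ Fintype.card ι * F x := fun x r hr => by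
    simp only [F, sum_abs_rpow_smul_rpow hp0 hr, rpow_natCast]
  have hlim := ZLattice.covolume.tendsto_card_le_div
    (Submodule.span ℤ (range (Pi.basisFun ℝ ι))) hX hF
    (by rw [hF_one]; exact (isBounded_sum_rpow_le_one hp0).subset fun x hx => hx.2)
    (by
      rw [hF_one]
      exact (MeasurableSet.univ_pi fun _ => measurableSet_Ioi).inter
        (measurableSet_le (f := fun x : ι → ℝ => ∑ i, |x i| ^ p) (by fun_prop) measurable_const))
    (by rw [hF_one]; exact (convex_orthant_sum_rpow_le hp 1).addHaar_frontier volume)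
  rw [hF_one, volume_real_orthant_sum_rpow_le_one hp, ZLattice.covolume_span_basisFun,
    div_one] at hlim
  refine (hlim.comp (tendsto_rpow_atTop hd)).congr' ?_
  filter_upwards [eventually_gt_atTop 0] with T hT
  rw [Function.comp_apply, card_inter_span_basisFun fun x hx => hx.1]
  congr 4
  ext n
  simp [X, hF_le _ hT.le]

end

theorem weyl_law_cube_general (d : ℕ) (hd : 1 ≤ d) (s : ℝ) (hs1 : 1 / 2 < s)
    (L : ℝ) (hL : 0 < L) :
    Tendsto (fun E : ℝ =>
        (Nat.card {n : Fin d → ℕ |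
            (∀ i, 0 < n i) ∧ ∑ i, ((n i : ℝ) * Real.pi / L) ^ (2 * s) ≤ E} : ℝ) /
          E ^ ((d : ℝ) / (2 * s)))
      atTop
      (nhds (L ^ d / (2 * Real.pi) ^ d *
        ((2 * Real.Gamma (1 + 1 / (2 * s))) ^ d / Real.Gamma (1 + d / (2 * s))))) := by
  have : Nonempty (Fin d) := Fin.pos_iff_nonempty.mp hd
  have hp : 1 ≤ 2 * s := by linarith
  set κ := (L / π) ^ (2 * s)
  have hκ : 0 < κ := by positivity
  have hcount : ∀ E, {n : Fin d → ℕ | (∀ i, 0 < n i) ∧ ∑ i, ((n i : ℝ) * π / L) ^ (2 * s) ≤ E} =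
      {n | (∀ i, 0 < n i) ∧ ∑ i, (n i : ℝ) ^ (2 * s) ≤ κ * E} := by
    intro E
    have hterm : ∀ m : ℕ, ((m : ℝ) * π / L) ^ (2 * s) = (m : ℝ) ^ (2 * s) / κ := fun m => by
      rw [← div_rpow (Nat.cast_nonneg _) (div_pos hL pi_pos).le, div_div_eq_mul_div]
    simp_rw [hterm, ← Finset.sum_div, div_le_iff₀' hκ]
  have hκd : κ ^ ((d : ℝ) / (2 * s)) = (L / π) ^ d := by
    rw [← rpow_mul (div_pos hL pi_pos).le, mul_div_cancel₀ _ (by positivity), rpow_natCast]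
  have hlim := ((tendsto_card_posNat_sum_rpow_le_div (ι := Fin d) hp).comp
    (tendsto_id.const_mul_atTop hκ)).mul_const (κ ^ ((d : ℝ) / (2 * s)))
  convert hlim.congr' ?_ using 2
  · rw [hκd, Fintype.card_fin, add_comm (1 / (2 * s)), add_comm ((d : ℝ) / (2 * s)), mul_pow,
      div_pow, mul_pow]
    field_simp
  · filter_upwards [eventually_gt_atTop 0] with E hE
    simp only [Function.comp_apply, id, hcount, Fintype.card_fin]
    rw [mul_rpow hκ.le hE.le]
    field_simp

theorem weyl_law_cube (d : ℕ) (hd : 1 ≤ d) (s : ℝ) (hs1 : 1 / 2 < s) (hs2 : s ≤ 1)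
    (L : ℝ) (hL : 0 < L) :
    Tendsto (fun E : ℝ =>
        (Nat.card {n : Fin d → ℕ |
            (∀ i, 0 < n i) ∧ ∑ i, ((n i : ℝ) * Real.pi / L) ^ (2 * s) ≤ E} : ℝ) /
          E ^ ((d : ℝ) / (2 * s)))
      atTop
      (nhds (L ^ d / (2 * Real.pi) ^ d *
        ((2 * Real.Gamma (1 + 1 / (2 * s))) ^ d / Real.Gamma (1 + d / (2 * s))))) :=
  weyl_law_cube_general d hd s hs1 L hL
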